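/- Lemma (basins of attraction are asymptotically covered by basins of physical measures): Let f be a diffeomorphism of a compact boundaryless finite-dimensional manifold M satisfying Conditions A and B of Theorem A for a family {Λ_i}_{i=1}^N of pairwise disjoint attractors and a physical random perturbation F, and let μ_i^ε be the unique physical probability measure near Λ_i provided by the localization proposition for all small enough ε > 0. Then for each i ∈ {1,…,N}, m(W^s(Λ_i) \ B(μ_i^ε)) → 0 as ε → 0⁺. -/

import Mathlib

open MeasureTheory Metric Filter Topology Set
open scoped Manifold ENNReal

noncomputable section

/-- The parameter space `ℝⁿ` of the random perturbations. -/
abbrev Par (n : ℕ) : Type := EuclideanSpace ℝ (Fin n)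

/-- Normalized Lebesgue measure on the closed `ε`-ball of `ℝⁿ`. -/
noncomputable def ballMeasure (n : ℕ) (ε : ℝ) : Measure (Par n) :=
  (volume (closedBall (0 : Par n) ε))⁻¹ • volume.restrict (closedBall (0 : Par n) ε)

/-- The perturbation space `Δ_ε`: sequences of parameter vectors of norm at most `ε`. -/
def Delta (n : ℕ) (ε : ℝ) : Set (ℕ → Par n) := {t | ∀ j, ‖t j‖ ≤ ε}

/-- The perturbed iterates `f^j(x, t̲) = f_{t_j} ∘ ⋯ ∘ f_{t_1} (x)`. -/
def iterP {M : Type*} {n : ℕ} (F : M → Par n → M) : ℕ → M → (ℕ → Par n) → M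
  | 0, x, _ => x
  | k + 1, x, t => F (iterP F k x t) (t k)

/-- `ν` is the infinite product `ν_ε^∞` of the normalized Lebesgue measures on the closed
`ε`-ball, characterized as the probability measure with the correct finite-dimensional
marginals on cylinder sets. -/
def IsProductNoise {n : ℕ} (ε : ℝ) (ν : Measure (ℕ → Par n)) : Prop :=
  IsProbabilityMeasure ν ∧
    ∀ (k : ℕ) (s : Fin k → Set (Par n)), (∀ i, MeasurableSet (s i)) →
      ν {t | ∀ i : Fin k, t (i : ℕ) ∈ s i} = ∏ i, ballMeasure n ε (s i)

/-- The support of a measure: the points all of whose open neighborhoods have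
positive measure. -/
def mSupp {M : Type*} [TopologicalSpace M] [MeasurableSpace M] (μ : Measure M) : Set M :=
  {x | ∀ U : Set M, IsOpen U → x ∈ U → 0 < μ U}

/-- The time averages of every continuous function along the random orbit of `x` driven by
the perturbation vector `t̲` converge to the space average w.r.t. `μ`, i.e. the empirical
measures `(1/N) ∑_{j<N} δ_{f^j(x,t̲)}` converge weakly* to `μ`. -/
def AvgTendsto {M : Type*} [TopologicalSpace M] [MeasurableSpace M] {n : ℕ}
    (F : M → Par n → M) (x : M) (t : ℕ → Par n) (μ : Measure M) : Prop :=
  ∀ φ : C(M, ℝ),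
    Tendsto (fun N : ℕ => (N : ℝ)⁻¹ * ∑ j ∈ Finset.range N, φ (iterP F j x t))
      atTop (𝓝 (∫ y, φ y ∂μ))

/-- The basin `B(μ)` of a measure `μ` under the noise `ν`. -/
def measBasin {M : Type*} [TopologicalSpace M] [MeasurableSpace M] {n : ℕ}
    (ν : Measure (ℕ → Par n)) (F : M → Par n → M) (μ : Measure M) : Set M :=
  {x | ∀ᵐ t ∂ν, AvgTendsto F x t μ}

/-- A physical measure for the perturbation with noise `ν`: a probability measure whose
basin has positive volume. -/
def IsPhysicalMeasure {M : Type*} [TopologicalSpace M] [MeasurableSpace M] {n : ℕ}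
    (m : Measure M) (ν : Measure (ℕ → Par n)) (F : M → Par n → M) (μ : Measure M) : Prop :=
  IsProbabilityMeasure μ ∧ 0 < m (measBasin ν F μ)

/-- The mean sojourn time of the random orbits of `x` exists and equals `μ`:
`(1/N) ∑_{j<N} f^j(x,·)_* ν → μ` weakly*. -/
def SojournTime {M : Type*} [TopologicalSpace M] [MeasurableSpace M] {n : ℕ}
    (ν : Measure (ℕ → Par n)) (F : M → Par n → M) (x : M) (μ : Measure M) : Prop :=
  ∀ φ : C(M, ℝ),
    Tendsto
      (fun N : ℕ => (N : ℝ)⁻¹ * ∑ j ∈ Finset.range N, ∫ t, φ (iterP F j x t) ∂ν)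
      atTop (𝓝 (∫ y, φ y ∂μ))

/-- The mean sojourn time of the whole random system exists and equals `μ`. -/
def GlobalSojourn {M : Type*} [TopologicalSpace M] [MeasurableSpace M] {n : ℕ}
    (m : Measure M) (ν : Measure (ℕ → Par n)) (F : M → Par n → M) (μ : Measure M) : Prop :=
  ∀ φ : C(M, ℝ),
    Tendsto
      (fun N : ℕ => (N : ℝ)⁻¹ *
        ∑ j ∈ Finset.range N, ∫ x, (∫ t, φ (iterP F j x t) ∂ν) ∂m)
      atTop (𝓝 (∫ y, φ y ∂μ))

/-- The skew product `S_ε (x, t̲) = (f_{t₁} x, σ t̲)`. -/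
def skewProd {M : Type*} {n : ℕ} (F : M → Par n → M) :
    M × (ℕ → Par n) → M × (ℕ → Par n) :=
  fun p => (F p.1 (p.2 0), fun j => p.2 (j + 1))

/-- An attractor of `f`: a compact invariant set with a trapping neighborhood `U` with
`Λ = ⋂_{k ≥ 1} f^k (closure U)` and a point with dense forward orbit. -/
structure IsAttractor {M : Type*} [MetricSpace M] (f : M → M) (Λ : Set M) : Prop where
  compact : IsCompact Λ
  invariant : f '' Λ = Λ
  trapped : ∃ U : Set M, IsOpen U ∧ Λ ⊆ U ∧ f '' closure U ⊆ U ∧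
    Λ = ⋂ k : ℕ, f^[k + 1] '' closure U
  transitive : ∃ x ∈ Λ, closure (range fun k : ℕ => f^[k + 1] x) = Λ

/-- The basin of attraction `W^s(Λ)`. -/
def basinAttr {M : Type*} [MetricSpace M] (f : M → M) (Λ : Set M) : Set M :=
  {x | Tendsto (fun k => infDist (f^[k] x) Λ) atTop (𝓝 0)}

/-- `F`, together with the noise measures `ν ε`, the thresholds `K ε` and the radii `ξ ε`,
is a physical random perturbation of the diffeomorphism `f` of the compact boundaryless
manifold `M` with reference (Riemannian volume) measure `m`, for noise levels in `(0, ε₀)`. -/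
structure IsPhysPert (d : ℕ) {n : ℕ} {M : Type*} [MetricSpace M] [CompactSpace M]
    [ChartedSpace (EuclideanSpace ℝ (Fin d)) M] [IsManifold (𝓡 d) (⊤ : ℕ∞) M]
    [MeasurableSpace M] [BorelSpace M]
    (f : M → M) (m : Measure M) (F : M → Par n → M)
    (ν : ℝ → Measure (ℕ → Par n)) (K : ℝ → ℕ) (ξ : ℝ → ℝ) (ε₀ : ℝ) : Prop where
  eps0_mem : ε₀ ∈ Ioo (0 : ℝ) 1
  smooth : ContMDiff ((𝓡 d).prod (𝓘(ℝ, Par n))) (𝓡 d) 1 (Function.uncurry F)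
  diffeo : ∀ t : Par n, ‖t‖ < 1 →
    ∃ g : Diffeomorph (𝓡 d) (𝓡 d) M M 1, ∀ x, g x = F x t
  base : ∀ x : M, F x 0 = f x
  noise : ∀ ε ∈ Ioo (0 : ℝ) ε₀, IsProductNoise ε (ν ε)
  xi_pos : ∀ ε ∈ Ioo (0 : ℝ) ε₀, 0 < ξ ε
  cover : ∀ ε ∈ Ioo (0 : ℝ) ε₀, ∀ x : M, ∀ j ≥ K ε,
    ball (f^[j] x) (ξ ε) ⊆ (fun t => iterP F j x t) '' Delta n ε
  absCont : ∀ ε ∈ Ioo (0 : ℝ) ε₀, ∀ x : M, ∀ k ≥ K ε,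
    (ν ε).map (fun t => iterP F k x t) ≪ m

/-- The family `ε ↦ με ε`, `0 < ε < εthr`, of localized physical measures near the
attractor `Λ`, inside a completely forward invariant open neighborhood `U` of `Λ`
(the conclusion of the localization proposition). -/
def IsLocalizedPhysFamily {M : Type*} [MetricSpace M] [MeasurableSpace M] {n : ℕ}
    (F : M → Par n → M) (ν : ℝ → Measure (ℕ → Par n))
    (Λ U : Set M) (εthr : ℝ) (με : ℝ → Measure M) : Prop :=
  0 < εthr ∧ IsOpen U ∧ Λ ⊆ U ∧
    ∀ ε ∈ Ioo (0 : ℝ) εthr,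
      IsProbabilityMeasure (με ε) ∧ Λ ⊆ mSupp (με ε) ∧ mSupp (με ε) ⊆ U ∧
      (∀ t : Par n, ‖t‖ ≤ ε → (fun x => F x t) '' closure U ⊆ U) ∧
      ∀ x ∈ U, ∀ᵐ t ∂(ν ε), AvgTendsto F x t (με ε)

/-- Weak* convergence `με ε → μ` as `ε → 0⁺`. -/
def WeakStarAtZero {M : Type*} [TopologicalSpace M] [MeasurableSpace M]
    (με : ℝ → Measure M) (μ : Measure M) : Prop :=
  ∀ φ : C(M, ℝ),
    Tendsto (fun ε => ∫ y, φ y ∂(με ε)) (𝓝[>] (0 : ℝ)) (𝓝 (∫ y, φ y ∂μ))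

/-- `Λ` is a stochastically stable attractor: it carries an `f`-invariant probability
measure `μ` with `supp μ = Λ` to which the localized physical measures `με ε` converge
weakly* as the noise level tends to zero. -/
def IsStochasticallyStable {M : Type*} [MetricSpace M] [MeasurableSpace M]
    (f : M → M) (Λ : Set M) (μ : Measure M) (με : ℝ → Measure M) : Prop :=
  IsProbabilityMeasure μ ∧ μ.map f = μ ∧ mSupp μ = Λ ∧ WeakStarAtZero με μ

/-! ### Auxiliary lemmas -/

section Aux

variable {M : Type*} {n : ℕ}

lemma iterP_congr (F : M → Par n → M) : ∀ (k : ℕ) (x : M) (t t' : ℕ → Par n),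
    (∀ j < k, t j = t' j) → iterP F k x t = iterP F k x t'
  | 0, _, _, _, _ => rfl
  | k+1, x, t, t', h => by
      simp only [iterP,
        iterP_congr F k x t t' (fun j hj => h j (Nat.lt_succ_of_lt hj)),
        h k (Nat.lt_succ_self k)]

lemma iterP_add (F : M → Par n → M) (k : ℕ) (x : M) (t : ℕ → Par n) :
    ∀ j : ℕ, iterP F (j + k) x t = iterP F j (iterP F k x t) (fun m => t (m + k))
  | 0 => by simp [Nat.zero_add, iterP]
  | j+1 => by
      have hjk : j + 1 + k = (j + k) + 1 := by omega
      rw [hjk]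
      simp only [iterP, iterP_add F k x t j]

lemma iterP_zero_noise (F : M → Par n → M) (f : M → M) (hf : ∀ x, F x 0 = f x) (x : M) :
    ∀ k, iterP F k x (fun _ => 0) = f^[k] x
  | 0 => rfl
  | k+1 => by
      rw [Function.iterate_succ_apply']
      simp only [iterP, iterP_zero_noise F f hf x k, hf]

lemma continuous_iterP [TopologicalSpace M] (F : M → Par n → M)
    (hF : Continuous (Function.uncurry F)) :
    ∀ k : ℕ, Continuous fun p : M × (ℕ → Par n) => iterP F k p.1 p.2
  | 0 => continuous_fst
  | k+1 => by
      have h1 := continuous_iterP F hF k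
      exact hF.comp (h1.prodMk ((continuous_apply k).comp continuous_snd))

lemma cesaro_shift {a : ℕ → ℝ} {C L : ℝ} (hC : ∀ j, |a j| ≤ C) (k : ℕ)
    (h : Tendsto (fun N : ℕ => (N : ℝ)⁻¹ * ∑ j ∈ Finset.range N, a (j + k)) atTop (𝓝 L)) :
    Tendsto (fun N : ℕ => (N : ℝ)⁻¹ * ∑ j ∈ Finset.range N, a j) atTop (𝓝 L) := by
  have hC0 : (0 : ℝ) ≤ C := le_trans (abs_nonneg _) (hC 0)
  have hdiff : Tendsto (fun N : ℕ => (N : ℝ)⁻¹ * ∑ j ∈ Finset.range N, a j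
      - (N : ℝ)⁻¹ * ∑ j ∈ Finset.range N, a (j + k)) atTop (𝓝 0) := by
    refine squeeze_zero_norm' (a := fun N : ℕ => (N : ℝ)⁻¹ * (2 * k * C)) ?_ ?_
    · filter_upwards [eventually_ge_atTop k] with N hNk
      have hshift : ∑ j ∈ Finset.range N, a (j + k) = ∑ j ∈ Finset.Ico k (N + k), a j := by
        rw [Finset.sum_Ico_eq_sum_range]
        simp only [Nat.add_sub_cancel]
        exact Finset.sum_congr rfl fun j _ => by rw [Nat.add_comm]
      have h1 : ∑ j ∈ Finset.Ico 0 k, a j + ∑ j ∈ Finset.Ico k N, a j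
          = ∑ j ∈ Finset.range N, a j := by
        rw [Finset.range_eq_Ico]
        exact Finset.sum_Ico_consecutive _ (Nat.zero_le k) hNk
      have h2 : ∑ j ∈ Finset.Ico k N, a j + ∑ j ∈ Finset.Ico N (N + k), a j
          = ∑ j ∈ Finset.Ico k (N + k), a j :=
        Finset.sum_Ico_consecutive _ hNk (Nat.le_add_right N k)
      have key : ∑ j ∈ Finset.range N, a j - ∑ j ∈ Finset.range N, a (j + k)
          = ∑ j ∈ Finset.Ico 0 k, a j - ∑ j ∈ Finset.Ico N (N + k), a j := by
        rw [hshift, ← h1, ← h2]; ring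
      have habs : ∀ (s : Finset ℕ), |∑ j ∈ s, a j| ≤ s.card * C := fun s =>
        le_trans (Finset.abs_sum_le_sum_abs _ _)
          (le_trans (Finset.sum_le_card_nsmul s _ C fun j _ => hC j) (by
            simp [nsmul_eq_mul]))
      have hb : |∑ j ∈ Finset.range N, a j - ∑ j ∈ Finset.range N, a (j + k)|
          ≤ 2 * k * C := by
        rw [key]
        calc |∑ j ∈ Finset.Ico 0 k, a j - ∑ j ∈ Finset.Ico N (N + k), a j|
            ≤ |∑ j ∈ Finset.Ico 0 k, a j| + |∑ j ∈ Finset.Ico N (N + k), a j| :=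
              abs_sub _ _
          _ ≤ (Finset.Ico 0 k).card * C + (Finset.Ico N (N + k)).card * C :=
              add_le_add (habs _) (habs _)
          _ = 2 * k * C := by simp [Nat.card_Ico]; ring
      rw [← mul_sub, Real.norm_eq_abs, abs_mul]
      refine mul_le_mul (le_of_eq (abs_of_nonneg (by positivity))) hb (abs_nonneg _)
        (by positivity)
    · have : Tendsto (fun N : ℕ => (N : ℝ)⁻¹) atTop (𝓝 0) :=
        tendsto_inv_atTop_nhds_zero_nat
      simpa using this.mul_const (2 * k * C)
  have := hdiff.add h
  rw [zero_add] at this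
  refine this.congr fun N => ?_
  ring

lemma avgTendsto_of_shift [MetricSpace M] [CompactSpace M] [MeasurableSpace M]
    (F : M → Par n → M) (x : M) (t : ℕ → Par n) (k : ℕ) (μ : Measure M)
    (h : AvgTendsto F (iterP F k x t) (fun m => t (m + k)) μ) :
    AvgTendsto F x t μ := by
  intro φ
  have hb := h φ
  have hrw : ∀ j, iterP F j (iterP F k x t) (fun m => t (m + k)) = iterP F (j + k) x t :=
    fun j => (iterP_add F k x t j).symm
  simp only [hrw] at hb
  exact cesaro_shift (a := fun j => φ (iterP F j x t)) (C := ‖φ‖)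
    (fun j => by simpa [Real.norm_eq_abs] using φ.norm_coe_le_norm (iterP F j x t)) k hb

end Aux

section MeasAux

/-- Initial-segment cylinder sets. -/
def seqCyl (n k : ℕ) (s : Fin k → Set (Par n)) : Set (ℕ → Par n) :=
  {t | ∀ i : Fin k, t (i : ℕ) ∈ s i}

/-- The collection of measurable initial-segment cylinders. -/
def seqCyls (n : ℕ) : Set (Set (ℕ → Par n)) :=
  {S | ∃ k, ∃ s : Fin k → Set (Par n), (∀ i, MeasurableSet (s i)) ∧ S = seqCyl n k s}

lemma isProbabilityMeasure_ballMeasure (n : ℕ) {ε : ℝ} (hε : 0 < ε) :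
    IsProbabilityMeasure (ballMeasure n ε) := by
  constructor
  rw [ballMeasure, Measure.smul_apply, Measure.restrict_apply MeasurableSet.univ,
    univ_inter, smul_eq_mul]
  exact ENNReal.inv_mul_cancel
    (ne_of_gt (measure_closedBall_pos volume (0 : Par n) hε))
    measure_closedBall_lt_top.ne

lemma ballMeasure_compl_closedBall (n : ℕ) (ε : ℝ) :
    ballMeasure n ε ((closedBall (0 : Par n) ε)ᶜ) = 0 := by
  simp [ballMeasure, Measure.restrict_apply measurableSet_closedBall.compl]

lemma measurableSet_seqCyl {n k : ℕ} {s : Fin k → Set (Par n)}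
    (hs : ∀ i, MeasurableSet (s i)) : MeasurableSet (seqCyl n k s) := by
  have : seqCyl n k s = ⋂ i : Fin k, (fun t : ℕ → Par n => t (i : ℕ)) ⁻¹' s i := by
    ext t; simp [seqCyl]
  rw [this]
  exact MeasurableSet.iInter fun i => measurable_pi_apply _ (hs i)

lemma seqCyl_single (n j : ℕ) (s : Set (Par n)) :
    seqCyl n (j + 1) (fun i => if (i : ℕ) = j then s else univ)
      = (fun t : ℕ → Par n => t j) ⁻¹' s := by
  ext t
  simp only [seqCyl, mem_setOf_eq, mem_preimage]
  constructor
  · intro h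
    have := h ⟨j, Nat.lt_succ_self j⟩
    simpa using this
  · intro h i
    by_cases hij : (i : ℕ) = j
    · simpa [hij] using h
    · simp [hij]

lemma noise_marginal {n : ℕ} {ε : ℝ} {ν : Measure (ℕ → Par n)} (hν : IsProductNoise ε ν)
    (hε : 0 < ε) (j : ℕ) {s : Set (Par n)} (hs : MeasurableSet s) :
    ν ((fun t : ℕ → Par n => t j) ⁻¹' s) = ballMeasure n ε s := by
  haveI := isProbabilityMeasure_ballMeasure n hε
  rw [← seqCyl_single n j s]
  rw [show seqCyl n (j + 1) (fun i => if (i : ℕ) = j then s else univ)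
      = {t : ℕ → Par n | ∀ i : Fin (j + 1), t (i : ℕ) ∈ (if (i : ℕ) = j then s else univ)}
    from rfl]
  rw [hν.2 (j + 1) _ (fun i => by split <;> simp [hs])]
  have h2 : ∀ i : Fin (j + 1), ((i : ℕ) = j) ↔ (i = ⟨j, Nat.lt_succ_self j⟩) := fun i => by
    simp [Fin.ext_iff]
  calc (∏ i : Fin (j + 1), ballMeasure n ε (if (i : ℕ) = j then s else univ))
      = ∏ i : Fin (j + 1),
          (if i = ⟨j, Nat.lt_succ_self j⟩ then ballMeasure n ε s else 1) := by
        refine Finset.prod_congr rfl fun i _ => ?_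
        by_cases hij : (i : ℕ) = j
        · simp [hij, (h2 i).1 hij]
        · rw [if_neg hij, if_neg (fun h => hij ((h2 i).2 h)), measure_univ]
    _ = ballMeasure n ε s := by
        rw [Finset.prod_ite_eq' Finset.univ (⟨j, Nat.lt_succ_self j⟩ : Fin (j + 1))
          (fun _ => ballMeasure n ε s)]
        simp

lemma measurableSet_delta (n : ℕ) (ε : ℝ) : MeasurableSet (Delta n ε) := by
  have : Delta n ε = ⋂ j : ℕ, (fun t : ℕ → Par n => t j) ⁻¹' (closedBall (0 : Par n) ε) := by
    ext t; simp [Delta, mem_closedBall_zero_iff]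
  rw [this]
  exact MeasurableSet.iInter fun j => measurable_pi_apply _ measurableSet_closedBall

lemma noise_ae_delta {n : ℕ} {ε : ℝ} {ν : Measure (ℕ → Par n)} (hν : IsProductNoise ε ν)
    (hε : 0 < ε) : ∀ᵐ t ∂ν, t ∈ Delta n ε := by
  have h : ∀ j : ℕ, ∀ᵐ t ∂ν, ‖t j‖ ≤ ε := by
    intro j
    rw [ae_iff]
    have hset : {t : ℕ → Par n | ¬ ‖t j‖ ≤ ε}
        = (fun t : ℕ → Par n => t j) ⁻¹' ((closedBall (0 : Par n) ε)ᶜ) := by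
      ext t; simp [mem_closedBall_zero_iff]
    rw [hset, noise_marginal hν hε j measurableSet_closedBall.compl,
      ballMeasure_compl_closedBall]
  exact (ae_all_iff.2 h).mono fun t ht => ht

lemma isPiSystem_seqCyls (n : ℕ) : IsPiSystem (seqCyls n) := by
  rintro S ⟨k, s, hs, rfl⟩ S' ⟨k', s', hs', rfl⟩ -
  refine ⟨max k k', fun i =>
    (if h : (i : ℕ) < k then s ⟨i, h⟩ else univ) ∩
      (if h : (i : ℕ) < k' then s' ⟨i, h⟩ else univ), fun i => ?_, ?_⟩
  · apply MeasurableSet.inter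
    · by_cases h : (i : ℕ) < k
      · simpa [h] using hs ⟨i, h⟩
      · simp [h]
    · by_cases h : (i : ℕ) < k'
      · simpa [h] using hs' ⟨i, h⟩
      · simp [h]
  · ext t
    simp only [seqCyl, mem_inter_iff, mem_setOf_eq]
    constructor
    · rintro ⟨h1, h2⟩ i
      constructor
      · by_cases h : (i : ℕ) < k
        · simpa [h] using h1 ⟨i, h⟩
        · simp [h]
      · by_cases h : (i : ℕ) < k'
        · simpa [h] using h2 ⟨i, h⟩
        · simp [h]
    · intro h
      constructor
      · intro i
        have hik : (i : ℕ) < max k k' := lt_of_lt_of_le i.isLt (le_max_left _ _)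
        have := (h ⟨i, hik⟩).1
        simpa [i.isLt] using this
      · intro i
        have hik : (i : ℕ) < max k k' := lt_of_lt_of_le i.isLt (le_max_right _ _)
        have := (h ⟨i, hik⟩).2
        simpa [i.isLt] using this

lemma generateFrom_seqCyls (n : ℕ) :
    (inferInstance : MeasurableSpace (ℕ → Par n))
      = MeasurableSpace.generateFrom (seqCyls n) := by
  refine le_antisymm ?_ (MeasurableSpace.generateFrom_le ?_)
  · rw [show (inferInstance : MeasurableSpace (ℕ → Par n))
        = ⨆ j : ℕ, MeasurableSpace.comap (fun t : ℕ → Par n => t j) inferInstance from rfl]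
    refine iSup_le fun j => ?_
    intro S hS
    obtain ⟨s, hs, rfl⟩ := hS
    apply MeasurableSpace.measurableSet_generateFrom
    exact ⟨j + 1, fun i => if (i : ℕ) = j then s else univ,
      fun i => by by_cases h : (i : ℕ) = j <;> simp [h, hs], (seqCyl_single n j s).symm⟩
  · rintro S ⟨k, s, hs, rfl⟩
    exact measurableSet_seqCyl hs

lemma noise_ext {n : ℕ} {ν₁ ν₂ : Measure (ℕ → Par n)}
    [IsProbabilityMeasure ν₁] [IsProbabilityMeasure ν₂]
    (h : ∀ (k : ℕ) (s : Fin k → Set (Par n)), (∀ i, MeasurableSet (s i)) →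
      ν₁ (seqCyl n k s) = ν₂ (seqCyl n k s)) : ν₁ = ν₂ := by
  refine ext_of_generate_finite (seqCyls n) (generateFrom_seqCyls n)
    (isPiSystem_seqCyls n) ?_ (by simp)
  rintro S ⟨k, s, hs, rfl⟩
  exact h k s hs

/-- Concatenation of a finite noise block with an infinite noise sequence. -/
def joinSeq (n k : ℕ) (p : (Fin k → Par n) × (ℕ → Par n)) : ℕ → Par n :=
  fun m => if h : m < k then p.1 ⟨m, h⟩ else p.2 (m - k)

lemma measurable_joinSeq (n k : ℕ) : Measurable (joinSeq n k) := by
  rw [measurable_pi_iff]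
  intro m
  by_cases h : m < k
  · simp only [joinSeq, dif_pos h]
    exact (measurable_pi_apply _).comp measurable_fst
  · simp only [joinSeq, dif_neg h]
    exact (measurable_pi_apply _).comp measurable_snd

lemma prod_range_shift_eq {β : Type*} [CommMonoid β] (f : ℕ → β) (k K : ℕ)
    (h1 : ∀ m, K ≤ m → f m = 1) :
    (∏ m ∈ Finset.range k, f m) * (∏ m ∈ Finset.range (K - k), f (m + k))
      = ∏ m ∈ Finset.range K, f m := by
  rcases le_or_gt K k with h | h
  · have hKk : K - k = 0 := by omega
    rw [hKk]
    simp only [Finset.range_zero, Finset.prod_empty, mul_one]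
    exact (Finset.prod_subset (Finset.range_subset_range.2 h)
      (fun m hm hm' => h1 m (by simp only [Finset.mem_range] at hm hm'; omega))).symm
  · have h2 : ∏ m ∈ Finset.range (K - k), f (m + k) = ∏ m ∈ Finset.Ico k K, f m := by
      rw [Finset.prod_Ico_eq_prod_range]
      exact Finset.prod_congr rfl fun m _ => by rw [Nat.add_comm]
    rw [h2, Finset.prod_range_mul_prod_Ico f (le_of_lt h)]

lemma noise_map_joinSeq {n : ℕ} {ε : ℝ} (hε : 0 < ε) {ν : Measure (ℕ → Par n)}
    (hν : IsProductNoise ε ν) (k : ℕ) :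
    ((Measure.pi fun _ : Fin k => ballMeasure n ε).prod ν).map (joinSeq n k) = ν := by
  haveI := isProbabilityMeasure_ballMeasure n hε
  haveI := hν.1
  haveI : IsProbabilityMeasure
      (((Measure.pi fun _ : Fin k => ballMeasure n ε).prod ν).map (joinSeq n k)) :=
    Measure.isProbabilityMeasure_map (measurable_joinSeq n k).aemeasurable
  refine noise_ext ?_
  intro K s hs
  rw [Measure.map_apply (measurable_joinSeq n k) (measurableSet_seqCyl hs)]
  have hpre : joinSeq n k ⁻¹' seqCyl n K s
      = {a : Fin k → Par n | ∀ i : Fin K, ∀ h : (i : ℕ) < k, a ⟨i, h⟩ ∈ s i}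
        ×ˢ {b : ℕ → Par n | ∀ i : Fin K, k ≤ (i : ℕ) → b ((i : ℕ) - k) ∈ s i} := by
    ext p
    simp only [mem_preimage, seqCyl, mem_setOf_eq, mem_prod]
    constructor
    · intro h
      refine ⟨fun i hik => ?_, fun i hik => ?_⟩
      · have := h i; simp only [joinSeq, dif_pos hik] at this; exact this
      · have := h i; simp only [joinSeq, dif_neg (by omega : ¬ (i : ℕ) < k)] at this
        exact this
    · rintro ⟨h1, h2⟩ i
      by_cases hik : (i : ℕ) < k
      · simp only [joinSeq, dif_pos hik]; exact h1 i hik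
      · simp only [joinSeq, dif_neg hik]; exact h2 i (by omega)
  rw [hpre, Measure.prod_prod]
  -- the combined coordinate factor function
  set f : ℕ → ℝ≥0∞ := fun m => if h : m < K then ballMeasure n ε (s ⟨m, h⟩) else 1 with hf
  have hf1 : ∀ m, K ≤ m → f m = 1 := fun m hm => by
    simp only [hf]; exact dif_neg (by omega)
  -- the first factor
  have hA : (Measure.pi fun _ : Fin k => ballMeasure n ε)
      {a : Fin k → Par n | ∀ i : Fin K, ∀ h : (i : ℕ) < k, a ⟨i, h⟩ ∈ s i}
      = ∏ m ∈ Finset.range k, f m := by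
    have hset : {a : Fin k → Par n | ∀ i : Fin K, ∀ h : (i : ℕ) < k, a ⟨i, h⟩ ∈ s i}
        = Set.pi univ (fun j : Fin k => if h : (j : ℕ) < K then s ⟨j, h⟩ else univ) := by
      ext a
      simp only [mem_setOf_eq, Set.mem_pi, mem_univ, true_implies]
      constructor
      · intro h j
        by_cases hj : (j : ℕ) < K
        · simp only [dif_pos hj]
          simpa using h ⟨j, hj⟩ j.isLt
        · simp [hj]
      · intro h i hik
        have := h ⟨i, hik⟩
        simpa [i.isLt] using this
    rw [hset, Measure.pi_pi]
    have hfac : ∀ j : Fin k,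
        ballMeasure n ε (if h : (j : ℕ) < K then s ⟨j, h⟩ else univ) = f (j : ℕ) := by
      intro j
      by_cases hj : (j : ℕ) < K
      · simp [hf, hj]
      · simp [hf, hj, measure_univ]
    rw [Finset.prod_congr rfl fun j _ => hfac j]
    exact Fin.prod_univ_eq_prod_range f k
  rw [hA]
  -- the second factor
  have hB : ν {b : ℕ → Par n | ∀ i : Fin K, k ≤ (i : ℕ) → b ((i : ℕ) - k) ∈ s i}
      = ∏ m ∈ Finset.range (K - k), f (m + k) := by
    rcases le_or_gt K k with hKk | hKk
    · have hset : {b : ℕ → Par n | ∀ i : Fin K, k ≤ (i : ℕ) → b ((i : ℕ) - k) ∈ s i}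
          = univ := by
        ext b
        simp only [mem_setOf_eq, mem_univ, iff_true]
        intro i hik
        exact absurd (lt_of_lt_of_le i.isLt hKk) (not_lt.2 hik)
      have h0 : K - k = 0 := by omega
      rw [hset, measure_univ, h0]
      simp
    · have hset : {b : ℕ → Par n | ∀ i : Fin K, k ≤ (i : ℕ) → b ((i : ℕ) - k) ∈ s i}
          = seqCyl n (K - k) (fun i => s ⟨(i : ℕ) + k, by omega⟩) := by
        ext b
        simp only [seqCyl, mem_setOf_eq]
        constructor
        · intro h i
          have := h ⟨(i : ℕ) + k, by omega⟩ (by simp)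
          simpa using this
        · intro h i hik
          have := h ⟨(i : ℕ) - k, by omega⟩
          have hidx : (⟨(i : ℕ) - k + k, by omega⟩ : Fin K) = i := Fin.ext (by simp; omega)
          rw [hidx] at this
          simpa using this
      rw [hset]
      rw [show seqCyl n (K - k) (fun i => s ⟨(i : ℕ) + k, by omega⟩)
          = {t : ℕ → Par n | ∀ i : Fin (K - k),
              t (i : ℕ) ∈ (fun i' : Fin (K - k) => s ⟨(i' : ℕ) + k, by omega⟩) i} from rfl]
      rw [hν.2 (K - k) _ (fun i => hs _)]
      have hfac : ∀ i : Fin (K - k),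
          ballMeasure n ε (s ⟨(i : ℕ) + k, by omega⟩) = f ((i : ℕ) + k) := by
        intro i
        simp [hf, (by omega : (i : ℕ) + k < K)]
      rw [Finset.prod_congr rfl fun i _ => hfac i]
      exact Fin.prod_univ_eq_prod_range (fun m => f (m + k)) (K - k)
  rw [hB]
  -- the right-hand side
  rw [show seqCyl n K s = {t : ℕ → Par n | ∀ i : Fin K, t (i : ℕ) ∈ s i} from rfl]
  rw [hν.2 K s hs]
  have hfac : ∀ i : Fin K, ballMeasure n ε (s i) = f (i : ℕ) := by
    intro i
    simp [hf, i.isLt]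
  rw [Finset.prod_congr rfl fun i _ => hfac i, Fin.prod_univ_eq_prod_range f K]
  exact prod_range_shift_eq f k K hf1

lemma noise_null_of_sections {n : ℕ} {ε : ℝ} (hε : 0 < ε) {ν : Measure (ℕ → Par n)}
    (hν : IsProductNoise ε ν) (k : ℕ) {E : Set (ℕ → Par n)} (hE : MeasurableSet E)
    (hsec : ∀ a : Fin k → Par n, ν {b | joinSeq n k (a, b) ∈ E} = 0) : ν E = 0 := by
  haveI := isProbabilityMeasure_ballMeasure n hε
  haveI := hν.1
  conv_lhs => rw [← noise_map_joinSeq hε hν k]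
  rw [Measure.map_apply (measurable_joinSeq n k) hE,
    Measure.prod_apply ((measurable_joinSeq n k) hE)]
  have hz : ∀ a : Fin k → Par n, ν (Prod.mk a ⁻¹' (joinSeq n k ⁻¹' E)) = 0 :=
    fun a => hsec a
  rw [lintegral_congr hz, lintegral_zero]

end MeasAux

section AvgAux

variable {M : Type*} [MetricSpace M] [CompactSpace M] [MeasurableSpace M] [BorelSpace M] {n : ℕ}

lemma integrable_continuousMap (φ : C(M, ℝ)) (μ : Measure M) [IsFiniteMeasure μ] :
    Integrable φ μ :=
  φ.continuous.integrable_of_hasCompactSupport (HasCompactSupport.of_compactSpace _)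

lemma dist_integral_le (φ ψ : C(M, ℝ)) (μ : Measure M) [IsProbabilityMeasure μ] :
    dist (∫ y, φ y ∂μ) (∫ y, ψ y ∂μ) ≤ dist φ ψ := by
  rw [dist_eq_norm, ← integral_sub (integrable_continuousMap φ μ) (integrable_continuousMap ψ μ)]
  calc ‖∫ y, (φ y - ψ y) ∂μ‖
      ≤ dist φ ψ * (μ univ).toReal := by
        apply norm_integral_le_of_norm_le_const
        exact Eventually.of_forall fun y => by
          rw [Real.norm_eq_abs, ← Real.dist_eq]
          exact ContinuousMap.dist_apply_le_dist y
    _ = dist φ ψ := by simp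

lemma dist_avg_le (φ ψ : C(M, ℝ)) (g : ℕ → M) (N : ℕ) :
    dist ((N : ℝ)⁻¹ * ∑ j ∈ Finset.range N, φ (g j))
      ((N : ℝ)⁻¹ * ∑ j ∈ Finset.range N, ψ (g j)) ≤ dist φ ψ := by
  rw [Real.dist_eq, ← mul_sub, ← Finset.sum_sub_distrib, abs_mul]
  rcases Nat.eq_zero_or_pos N with h | h
  · simp [h, dist_nonneg]
  · have hN : (0 : ℝ) < N := by exact_mod_cast h
    have hb : |∑ j ∈ Finset.range N, (φ (g j) - ψ (g j))| ≤ N * dist φ ψ := by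
      refine le_trans (Finset.abs_sum_le_sum_abs _ _) ?_
      refine le_trans (Finset.sum_le_card_nsmul _ _ (dist φ ψ) fun j _ => ?_) ?_
      · rw [← Real.dist_eq]
        exact ContinuousMap.dist_apply_le_dist _
      · simp [nsmul_eq_mul]
    calc |(N : ℝ)⁻¹| * |∑ j ∈ Finset.range N, (φ (g j) - ψ (g j))|
        ≤ (N : ℝ)⁻¹ * (N * dist φ ψ) := by
          rw [abs_of_nonneg (by positivity : (0 : ℝ) ≤ (N : ℝ)⁻¹)]
          exact mul_le_mul_of_nonneg_left hb (by positivity)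
      _ = dist φ ψ := by field_simp

lemma avgTendsto_of_denseRange {F : M → Par n → M} {x : M} {t : ℕ → Par n}
    {μ : Measure M} [IsProbabilityMeasure μ] {D : ℕ → C(M, ℝ)} (hD : DenseRange D)
    (h : ∀ r, Tendsto (fun N : ℕ => (N : ℝ)⁻¹ * ∑ j ∈ Finset.range N, D r (iterP F j x t))
      atTop (𝓝 (∫ y, D r y ∂μ))) :
    AvgTendsto F x t μ := by
  intro φ
  rw [Metric.tendsto_atTop]
  intro δ hδ
  obtain ⟨r, hr⟩ := hD.exists_dist_lt φ (by linarith : (0 : ℝ) < δ / 3)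
  obtain ⟨N₀, hN₀⟩ := Metric.tendsto_atTop.1 (h r) (δ / 3) (by linarith)
  refine ⟨N₀, fun N hN => ?_⟩
  have h1 := dist_avg_le φ (D r) (fun j => iterP F j x t) N
  have h2 := hN₀ N hN
  have h3 := dist_integral_le (D r) φ μ
  have h4 : dist ((N : ℝ)⁻¹ * ∑ j ∈ Finset.range N, φ (iterP F j x t)) (∫ y, φ y ∂μ)
      ≤ dist ((N : ℝ)⁻¹ * ∑ j ∈ Finset.range N, φ (iterP F j x t))
          ((N : ℝ)⁻¹ * ∑ j ∈ Finset.range N, D r (iterP F j x t))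
        + dist ((N : ℝ)⁻¹ * ∑ j ∈ Finset.range N, D r (iterP F j x t)) (∫ y, D r y ∂μ)
        + dist (∫ y, D r y ∂μ) (∫ y, φ y ∂μ) := dist_triangle4 _ _ _ _
  have h5 : dist (D r) φ ≤ δ / 3 := le_of_lt (by rwa [dist_comm] at hr)
  have h6 : dist φ (D r) ≤ δ / 3 := le_of_lt hr
  calc dist ((N : ℝ)⁻¹ * ∑ j ∈ Finset.range N, φ (iterP F j x t)) (∫ y, φ y ∂μ)
      ≤ _ := h4
    _ < δ / 3 + (δ / 3) + (δ / 3) := by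
        have := le_trans h3 h5
        have := le_trans h1 h6
        linarith
    _ = δ := by ring

lemma measurableSet_avgTendsto {α : Type*} [MeasurableSpace α]
    {F : M → Par n → M} (hFc : Continuous (Function.uncurry F))
    {g : α → M} (hg : Measurable g) {G : α → ℕ → Par n} (hG : Measurable G)
    (μ : Measure M) [IsProbabilityMeasure μ] :
    MeasurableSet {a : α | AvgTendsto F (g a) (G a) μ} := by
  have hne : Nonempty C(M, ℝ) := ⟨0⟩
  obtain ⟨D, hD⟩ := TopologicalSpace.exists_dense_seq C(M, ℝ)
  have hset : {a : α | AvgTendsto F (g a) (G a) μ}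
      = ⋂ r : ℕ, {a : α | Tendsto (fun N : ℕ => (N : ℝ)⁻¹ *
          ∑ j ∈ Finset.range N, D r (iterP F j (g a) (G a))) atTop (𝓝 (∫ y, D r y ∂μ))} := by
    ext a
    simp only [mem_setOf_eq, mem_iInter]
    exact ⟨fun h r => h (D r), fun h => avgTendsto_of_denseRange hD h⟩
  rw [hset]
  refine MeasurableSet.iInter fun r => ?_
  apply measurableSet_tendsto
  intro N
  apply Measurable.const_mul
  apply Finset.measurable_sum
  intro j _
  have hcont : Continuous fun p : M × (ℕ → Par n) => (D r) (iterP F j p.1 p.2) :=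
    (D r).continuous.comp (continuous_iterP F hFc j)
  exact hcont.measurable.comp (hg.prodMk hG)

lemma delta_mono {δ δ' : ℝ} (h : δ ≤ δ') : Delta n δ ⊆ Delta n δ' :=
  fun _ ht j => le_trans (ht j) h

lemma isOpen_goodSet {F : M → Par n → M} (hFc : Continuous (Function.uncurry F))
    {U : Set M} (hU : IsOpen U) (k : ℕ) (δ : ℝ) :
    IsOpen {x : M | ∀ t ∈ Delta n δ, iterP F k x t ∈ U} := by
  have hcompact : IsCompact (Delta n δ) := by
    have hd : Delta n δ = Set.pi univ (fun _ : ℕ => closedBall (0 : Par n) δ) := by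
      ext t; simp [Delta, Set.mem_pi, mem_closedBall_zero_iff]
    rw [hd]
    exact isCompact_univ_pi fun _ => isCompact_closedBall _ _
  haveI : CompactSpace (Delta n δ) := isCompact_iff_compactSpace.1 hcompact
  have hclosed : IsClosed (Prod.fst ''
      {p : M × (Delta n δ) | iterP F k p.1 (p.2 : ℕ → Par n) ∈ Uᶜ}) := by
    apply isClosedMap_fst_of_compactSpace
    have hcont : Continuous fun p : M × (Delta n δ) => iterP F k p.1 (p.2 : ℕ → Par n) :=
      (continuous_iterP F hFc k).comp
        (continuous_fst.prodMk (continuous_subtype_val.comp continuous_snd))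
    exact hU.isClosed_compl.preimage hcont
  have hset : {x : M | ∀ t ∈ Delta n δ, iterP F k x t ∈ U}
      = (Prod.fst '' {p : M × (Delta n δ) | iterP F k p.1 (p.2 : ℕ → Par n) ∈ Uᶜ})ᶜ := by
    ext x
    constructor
    · intro h hx
      obtain ⟨⟨y, t⟩, hp, rfl⟩ := hx
      exact hp (h (t : ℕ → Par n) t.2)
    · intro h t ht
      by_contra hmem
      exact h ⟨(x, ⟨t, ht⟩), hmem, rfl⟩
  rw [hset]
  exact hclosed.isOpen_compl

end AvgAux

/-- **Basins of attraction are asymptotically covered by basins of physical measures.**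
Under Conditions A and B, for each attractor `Λ_i` the volume of the part of the basin
of attraction `W^s(Λ_i)` not covered by the basin `B(μ_i^ε)` of the localized physical
measure tends to zero as `ε → 0⁺`. -/
theorem basin_covered_by_measure_basin
    {d n : ℕ} {M : Type*} [MetricSpace M] [CompactSpace M]
    [ChartedSpace (EuclideanSpace ℝ (Fin d)) M] [IsManifold (𝓡 d) (⊤ : ℕ∞) M]
    [MeasurableSpace M] [BorelSpace M]
    (f : M → M) (m : Measure M) [IsProbabilityMeasure m] [m.IsOpenPosMeasure]
    (F : M → Par n → M) (ν : ℝ → Measure (ℕ → Par n))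
    (K : ℝ → ℕ) (ξ : ℝ → ℝ) (ε₀ : ℝ)
    (hF : IsPhysPert d f m F ν K ξ ε₀)
    {ι : Type} [Countable ι] (Λ : ι → Set M)
    (hdisj : ∀ i j, i ≠ j → Disjoint (Λ i) (Λ j))
    (hattr : ∀ i, IsAttractor f (Λ i))
    (hA : m ((⋃ i, basinAttr f (Λ i))ᶜ) = 0)
    (U : ι → Set M) (εthr : ι → ℝ) (με : ι → ℝ → Measure M) (μlim : ι → Measure M)
    (hloc : ∀ i, IsLocalizedPhysFamily F ν (Λ i) (U i) (εthr i) (με i))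
    (hB : ∀ i, IsStochasticallyStable f (Λ i) (μlim i) (με i)) :
    ∀ i : ι,
      Tendsto (fun ε => m (basinAttr f (Λ i) \ measBasin (ν ε) F (με i ε)))
        (𝓝[>] (0 : ℝ)) (𝓝 0) := by
  intro i
  classical
  obtain ⟨hεpos, hUopen, hΛU, hloci⟩ := hloc i
  have hFc : Continuous (Function.uncurry F) := hF.smooth.continuous
  have hfc : Continuous f := by
    have hfF : f = fun x => F x 0 := funext fun x => (hF.base x).symm
    rw [hfF]
    exact hFc.comp (continuous_id.prodMk continuous_const)
  obtain ⟨x₀, hx₀Λ, -⟩ := (hattr i).transitive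
  have hΛne : (Λ i).Nonempty := ⟨x₀, hx₀Λ⟩
  obtain ⟨rΛ, hrΛpos, hrΛ⟩ := (hattr i).compact.exists_thickening_subset_open hUopen hΛU
  -- the scale sequence
  set δseq : ℕ → ℝ := fun r => min (εthr i / 2) (1 / ((r : ℝ) + 1)) with hδseq
  have hδpos : ∀ r, 0 < δseq r := fun r => lt_min (by linarith) (by positivity)
  have hδlt : ∀ r, δseq r < εthr i := fun r =>
    lt_of_le_of_lt (min_le_left _ _) (by linarith)
  have hδanti : ∀ r r' : ℕ, r ≤ r' → δseq r' ≤ δseq r := by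
    intro r r' h
    refine min_le_min le_rfl ?_
    refine one_div_le_one_div_of_le (by positivity) ?_
    have : (r : ℝ) ≤ (r' : ℝ) := Nat.cast_le.2 h
    linarith
  have hδ0 : Tendsto δseq atTop (𝓝 0) := by
    apply squeeze_zero (fun r => (hδpos r).le) (fun r => min_le_right _ _)
    exact tendsto_one_div_add_atTop_nhds_zero_nat
  -- the good sets
  set S : ℕ → Set M := fun r => {x : M | ∀ t ∈ Delta n (δseq r), iterP F r x t ∈ U i}
    with hSdef
  have hSopen : ∀ r, IsOpen (S r) := fun r => isOpen_goodSet hFc hUopen r (δseq r)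
  have hstep : ∀ (k : ℕ) (δ : ℝ), 0 < δ → δ < εthr i →
      {x : M | ∀ t ∈ Delta n δ, iterP F k x t ∈ U i}
        ⊆ {x : M | ∀ t ∈ Delta n δ, iterP F (k + 1) x t ∈ U i} := by
    intro k δ hδ0' hδe x hx t ht
    have hinv := (hloci δ ⟨hδ0', hδe⟩).2.2.2.1
    show F (iterP F k x t) (t k) ∈ U i
    exact hinv (t k) (ht k) ⟨iterP F k x t, subset_closure (hx t ht), rfl⟩
  have hmonoGood : ∀ (k k' : ℕ) (δ : ℝ), 0 < δ → δ < εthr i → k ≤ k' →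
      {x : M | ∀ t ∈ Delta n δ, iterP F k x t ∈ U i}
        ⊆ {x : M | ∀ t ∈ Delta n δ, iterP F k' x t ∈ U i} := by
    intro k k' δ h0 he h
    induction k', h using Nat.le_induction with
    | base => exact subset_rfl
    | succ k' hk ih => exact ih.trans (hstep k' δ h0 he)
  have hGoodδ : ∀ (k : ℕ) (δ δ' : ℝ), δ' ≤ δ →
      {x : M | ∀ t ∈ Delta n δ, iterP F k x t ∈ U i}
        ⊆ {x : M | ∀ t ∈ Delta n δ', iterP F k x t ∈ U i} :=
    fun k δ δ' h x hx t ht => hx t (delta_mono h ht)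
  have hSmono : Monotone S := by
    intro r r' h
    exact (hGoodδ r (δseq r) (δseq r') (hδanti r r' h)).trans
      (hmonoGood r r' (δseq r') (hδpos r') (hδlt r') h)
  -- covering of the basin of attraction
  have hcov : basinAttr f (Λ i) ⊆ ⋃ r, S r := by
    intro x hx
    have hev : ∀ᶠ k in atTop, infDist (f^[k] x) (Λ i) < rΛ :=
      hx.eventually (gt_mem_nhds hrΛpos)
    obtain ⟨k, hk'⟩ := hev.exists
    have hk : f^[k] x ∈ U i :=
      hrΛ ((mem_thickening_iff_infDist_lt hΛne).2 hk')
    obtain ⟨r₀, hr₀⟩ : ∃ r₀ : ℕ, ∀ t ∈ Delta n (δseq r₀), iterP F k x t ∈ U i := by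
      by_contra hnot
      push_neg at hnot
      choose ts hts hUts using hnot
      have hlim : Tendsto ts atTop (𝓝 (fun _ => (0 : Par n))) := by
        rw [tendsto_pi_nhds]
        intro j
        exact squeeze_zero_norm (fun r => hts r j) hδ0
      have hc : Continuous fun t : ℕ → Par n => iterP F k x t :=
        (continuous_iterP F hFc k).comp (continuous_const.prodMk continuous_id)
      have hcont : Tendsto (fun r => iterP F k x (ts r)) atTop
          (𝓝 (iterP F k x (fun _ => 0))) := (hc.tendsto _).comp hlim
      have hmem : iterP F k x (fun _ => 0) ∈ U i := by
        rw [iterP_zero_noise F f hF.base]; exact hk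
      obtain ⟨r, hr⟩ := (hcont.eventually (hUopen.mem_nhds hmem)).exists
      exact hUts r hr
    rw [mem_iUnion]
    refine ⟨max k r₀, ?_⟩
    exact hmonoGood k (max k r₀) (δseq (max k r₀)) (hδpos _) (hδlt _) (le_max_left _ _)
      (hGoodδ k (δseq r₀) (δseq (max k r₀)) (hδanti r₀ (max k r₀) (le_max_right _ _)) hr₀)
  -- the key inclusion into the basin of the physical measure
  have hkey : ∀ (r : ℕ) (ε : ℝ), 0 < ε → ε ≤ δseq r → ε < εthr i → ε < ε₀ →
      S r ⊆ measBasin (ν ε) F (με i ε) := by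
    intro r ε hε0 hεδ hεthr hεε₀ x hx
    have hνp := hF.noise ε ⟨hε0, hεε₀⟩
    haveI hν1 := hνp.1
    obtain ⟨hμprob, hΛsupp, hsuppU, hUinv, hbasin⟩ := hloci ε ⟨hε0, hεthr⟩
    haveI := hμprob
    set E : Set (ℕ → Par n) := {t | t ∈ Delta n ε ∧
      ¬ AvgTendsto F (iterP F r x t) (fun m => t (m + r)) (με i ε)} with hE
    have hgmeas : Measurable fun t : ℕ → Par n => iterP F r x t :=
      ((continuous_iterP F hFc r).comp (continuous_const.prodMk continuous_id)).measurable
    have hGmeas : Measurable fun (t : ℕ → Par n) (m : ℕ) => t (m + r) := by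
      rw [measurable_pi_iff]; exact fun m => measurable_pi_apply (m + r)
    have hEmeas : MeasurableSet E :=
      (measurableSet_delta n ε).inter
        (measurableSet_avgTendsto hFc hgmeas hGmeas (με i ε)).compl
    have hsec : ∀ a : Fin r → Par n, (ν ε) {b | joinSeq n r (a, b) ∈ E} = 0 := by
      intro a
      by_cases ha : ∀ j : Fin r, ‖a j‖ ≤ ε
      · set ta : ℕ → Par n := fun m => if h : m < r then a ⟨m, h⟩ else 0 with hta
        have htaΔ : ta ∈ Delta n (δseq r) := by
          intro j
          by_cases h : j < r
          · simp only [hta, dif_pos h]; exact le_trans (ha ⟨j, h⟩) hεδ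
          · simp only [hta, dif_neg h, norm_zero]; exact (hδpos r).le
        have hyU : iterP F r x ta ∈ U i := hx ta htaΔ
        have hnull := hbasin (iterP F r x ta) hyU
        rw [ae_iff] at hnull
        refine measure_mono_null ?_ hnull
        intro b hb
        obtain ⟨hbΔ, hbn⟩ := hb
        have hsame : iterP F r x (joinSeq n r (a, b)) = iterP F r x ta := by
          apply iterP_congr
          intro j hj
          simp only [joinSeq, hta, dif_pos hj]
        have hshift : (fun m => joinSeq n r (a, b) (m + r)) = b := by
          funext m
          simp only [joinSeq, dif_neg (by omega : ¬ m + r < r), Nat.add_sub_cancel]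
        rw [hsame, hshift] at hbn
        exact hbn
      · push_neg at ha
        obtain ⟨j, hj⟩ := ha
        have hempty : {b : ℕ → Par n | joinSeq n r (a, b) ∈ E} = ∅ := by
          ext b
          simp only [mem_setOf_eq, mem_empty_iff_false, iff_false]
          intro hb
          have hbj := hb.1 (j : ℕ)
          rw [show joinSeq n r (a, b) (j : ℕ) = a j from by
            simp [joinSeq, j.isLt]] at hbj
          exact absurd hbj (not_le.2 hj)
        rw [hempty]
        simp
    have hEnull : (ν ε) E = 0 := noise_null_of_sections hε0 hνp r hEmeas hsec
    show ∀ᵐ t ∂(ν ε), AvgTendsto F x t (με i ε)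
    have hΔae := noise_ae_delta hνp hε0
    have hEae : ∀ᵐ t ∂(ν ε), t ∉ E := measure_eq_zero_iff_ae_notMem.1 hEnull
    filter_upwards [hΔae, hEae] with t htΔ htE
    have hAvgShift : AvgTendsto F (iterP F r x t) (fun m => t (m + r)) (με i ε) := by
      by_contra hc
      exact htE ⟨htΔ, hc⟩
    exact avgTendsto_of_shift F x t r (με i ε) hAvgShift
  -- the limit argument
  rw [ENNReal.tendsto_nhds_zero]
  intro η hη
  have hC : Tendsto (fun r : ℕ => m ((⋃ j, S j) \ S r)) atTop
      (𝓝 (m (⋂ r, (⋃ j, S j) \ S r))) := by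
    apply tendsto_measure_iInter_atTop
    · exact fun r =>
        ((isOpen_iUnion hSopen).measurableSet.diff (hSopen r).measurableSet).nullMeasurableSet
    · intro r r' h
      exact diff_subset_diff_right (hSmono h)
    · exact ⟨0, measure_ne_top m _⟩
  have hempty : (⋂ r, (⋃ j, S j) \ S r) = ∅ := by
    rw [← diff_iUnion]
    exact diff_self
  rw [hempty, measure_empty] at hC
  obtain ⟨r₀, hr₀⟩ := (hC.eventually (gt_mem_nhds hη)).exists
  have hc0 : 0 < min (δseq r₀) (min (εthr i) ε₀) :=
    lt_min (hδpos r₀) (lt_min hεpos hF.eps0_mem.1)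
  filter_upwards [Ioo_mem_nhdsGT_of_mem
    (show (0 : ℝ) ∈ Ico (0 : ℝ) (min (δseq r₀) (min (εthr i) ε₀)) from ⟨le_refl 0, hc0⟩)]
    with ε hε
  obtain ⟨hε0, hεlt⟩ := hε
  have hεδ : ε ≤ δseq r₀ := le_of_lt (lt_of_lt_of_le hεlt (min_le_left _ _))
  have hεthr' : ε < εthr i :=
    lt_of_lt_of_le hεlt (le_trans (min_le_right _ _) (min_le_left _ _))
  have hεε₀ : ε < ε₀ :=
    lt_of_lt_of_le hεlt (le_trans (min_le_right _ _) (min_le_right _ _))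
  have hsub : basinAttr f (Λ i) \ measBasin (ν ε) F (με i ε) ⊆ (⋃ j, S j) \ S r₀ :=
    fun x hx => ⟨hcov hx.1, fun hxS => hx.2 (hkey r₀ ε hε0 hεδ hεthr' hεε₀ hxS)⟩
  exact le_trans (measure_mono hsub) (le_of_lt hr₀)
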